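/- Let ≤* be the relation on 2^ω extending ≤₀ by additionally setting a ≤* b whenever a(k) = 1 and b(k) = 0 for all but finitely many k. Then there is an action of ℤ on the set of binary sequences that are not eventually constant (the odometer: adding 1 with carry) such that for such sequences a, b: a <* b iff b = z·a for some integer z > 0. -/

import Mathlib

/-- The anti-lexicographical relation `≤₀` on `2^ω`. -/
def le0 (a b : ℕ → Bool) : Prop :=
  a = b ∨ ∃ m, (∀ k, k > m → a k = b k) ∧ a m < b m

/-- The enlarged relation `≤*`: additionally `a ≤* b` whenever `a` is
eventually `1` and `b` is eventually `0`. -/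
def leStar (a b : ℕ → Bool) : Prop :=
  le0 a b ∨ ∃ m, ∀ k, k ≥ m → (a k = true ∧ b k = false)

/-- Strict version of `≤*`. -/
def ltStar (a b : ℕ → Bool) : Prop := leStar a b ∧ a ≠ b

/-- A binary sequence is not eventually constant. -/
def NotEvConst (a : ℕ → Bool) : Prop :=
  (¬ ∃ m, ∀ k, k ≥ m → a k = false) ∧ (¬ ∃ m, ∀ k, k ≥ m → a k = true)

lemma hasFalse {a : ℕ → Bool} (h : NotEvConst a) : ∃ k, a k = false := by
  by_contra hc
  push_neg at hc
  exact h.2 ⟨0, fun k _ => by simpa using hc k⟩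

lemma hasTrue {a : ℕ → Bool} (h : NotEvConst a) : ∃ k, a k = true := by
  by_contra hc
  push_neg at hc
  exact h.1 ⟨0, fun k _ => by simpa using hc k⟩

def oSucc (a : ℕ → Bool) (h : ∃ k, a k = false) : ℕ → Bool :=
  fun k => if k < Nat.find h then false else if k = Nat.find h then true else a k

def oPred (a : ℕ → Bool) (h : ∃ k, a k = true) : ℕ → Bool :=
  fun k => if k < Nat.find h then true else if k = Nat.find h then false else a k

lemma notEvConst_of_agree {a b : ℕ → Bool} (n : ℕ)
    (hab : ∀ k, k > n → a k = b k) (h : NotEvConst a) : NotEvConst b := by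
  constructor
  · rintro ⟨m, hm⟩
    exact h.1 ⟨max m (n+1), fun k hk => by
      rw [hab k (by omega)]; exact hm k (by omega)⟩
  · rintro ⟨m, hm⟩
    exact h.2 ⟨max m (n+1), fun k hk => by
      rw [hab k (by omega)]; exact hm k (by omega)⟩

lemma oSucc_agree {a : ℕ → Bool} (h : ∃ k, a k = false) :
    ∀ k, k > Nat.find h → oSucc a h k = a k := by
  intro k hk
  simp [oSucc, Nat.lt_asymm hk, Nat.ne_of_gt hk]

lemma oPred_agree {a : ℕ → Bool} (h : ∃ k, a k = true) :
    ∀ k, k > Nat.find h → oPred a h k = a k := by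
  intro k hk
  simp [oPred, Nat.lt_asymm hk, Nat.ne_of_gt hk]

abbrev OS := {a : ℕ → Bool // NotEvConst a}

def E : Equiv.Perm OS where
  toFun a := ⟨oSucc a.1 (hasFalse a.2),
    notEvConst_of_agree _ (fun k hk => (oSucc_agree (hasFalse a.2) k hk).symm) a.2⟩
  invFun a := ⟨oPred a.1 (hasTrue a.2),
    notEvConst_of_agree _ (fun k hk => (oPred_agree (hasTrue a.2) k hk).symm) a.2⟩
  left_inv a := by
    apply Subtype.ext
    set hF := hasFalse a.2
    set n := Nat.find hF with hn
    have hsn : oSucc a.1 hF n = true := by simp [oSucc, ← hn]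
    have hslt : ∀ k, k < n → oSucc a.1 hF k = false := by
      intro k hk; simp [oSucc, ← hn, hk]
    have hT : ∃ k, oSucc a.1 hF k = true := ⟨n, hsn⟩
    have hfind : Nat.find (hasTrue (notEvConst_of_agree _
        (fun k hk => (oSucc_agree hF k hk).symm) a.2)) = n := by
      rw [Nat.find_eq_iff]
      exact ⟨hsn, fun m hm => by simp [hslt m hm]⟩
    funext k
    simp only [oPred, hfind]
    rcases lt_trichotomy k n with hk | hk | hk
    · rw [if_pos hk]
      have := Nat.find_min hF hk
      simp only [Bool.not_eq_false] at this
      exact this.symm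
    · rw [if_neg (by omega), if_pos hk, hk]
      exact (Nat.find_spec hF).symm
    · rw [if_neg (by omega), if_neg (by omega)]
      exact oSucc_agree hF k hk
  right_inv a := by
    apply Subtype.ext
    set hT := hasTrue a.2
    set n := Nat.find hT with hn
    have hsn : oPred a.1 hT n = false := by simp [oPred, ← hn]
    have hslt : ∀ k, k < n → oPred a.1 hT k = true := by
      intro k hk; simp [oPred, ← hn, hk]
    have hfind : Nat.find (hasFalse (notEvConst_of_agree _
        (fun k hk => (oPred_agree hT k hk).symm) a.2)) = n := by
      rw [Nat.find_eq_iff]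
      exact ⟨hsn, fun m hm => by simp [hslt m hm]⟩
    funext k
    simp only [oSucc, hfind]
    rcases lt_trichotomy k n with hk | hk | hk
    · rw [if_pos hk]
      have := Nat.find_min hT hk
      simp only [Bool.not_eq_true] at this
      exact this.symm
    · rw [if_neg (by omega), if_pos hk, hk]
      exact (Nat.find_spec hT).symm
    · rw [if_neg (by omega), if_neg (by omega)]
      exact oPred_agree hT k hk

def bval (a : ℕ → Bool) (m : ℕ) : ℕ := ∑ k ∈ Finset.range (m+1), (a k).toNat * 2^k

lemma pow_sum (n : ℕ) : ∑ k ∈ Finset.range n, 2^k = 2^n - 1 := by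
  induction n with
  | zero => simp
  | succ n ih =>
    rw [Finset.sum_range_succ, ih]
    have : 0 < 2^n := Nat.pow_pos (by norm_num)
    have : 2^(n+1) = 2 * 2^n := by ring
    omega

lemma bval_lt (a : ℕ → Bool) (m : ℕ) : bval a m < 2^(m+1) := by
  induction m with
  | zero =>
    simp only [bval, Finset.sum_range_one, pow_zero, mul_one]
    cases h : a 0 <;> simp [h]
  | succ m ih =>
    have h1 : bval a (m+1) = bval a m + (a (m+1)).toNat * 2^(m+1) :=
      Finset.sum_range_succ _ _
    have h2 : 2^(m+2) = 2 * 2^(m+1) := by ring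
    rw [h1]
    cases h : a (m+1) <;> simp [h] <;> omega

lemma bval_inj : ∀ m (a b : ℕ → Bool), bval a m = bval b m → ∀ k, k ≤ m → a k = b k := by
  intro m
  induction m with
  | zero =>
    intro a b h k hk
    interval_cases k
    simp only [bval, Finset.sum_range_one, pow_zero, mul_one] at h
    cases ha : a 0 <;> cases hb : b 0 <;> simp_all
  | succ m ih =>
    intro a b h k hk
    have ha1 : bval a (m+1) = bval a m + (a (m+1)).toNat * 2^(m+1) :=
      Finset.sum_range_succ _ _
    have hb1 : bval b (m+1) = bval b m + (b (m+1)).toNat * 2^(m+1) :=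
      Finset.sum_range_succ _ _
    have hla := bval_lt a m
    have hlb := bval_lt b m
    have htop : a (m+1) = b (m+1) ∧ bval a m = bval b m := by
      cases ha : a (m+1) <;> cases hb : b (m+1) <;> simp_all <;> omega
    rcases Nat.lt_succ_iff_lt_or_eq.mp (Nat.lt_succ_of_le hk) with h' | h'
    · exact ih a b htop.2 k (by omega)
    · rw [h']; exact htop.1

lemma bval_tail_eq {a b : ℕ → Bool} {n m : ℕ} (hnm : n ≤ m)
    (h : ∀ k, n < k → k ≤ m → a k = b k) :
    ∑ k ∈ Finset.Ico (n+1) (m+1), (a k).toNat * 2^k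
      = ∑ k ∈ Finset.Ico (n+1) (m+1), (b k).toNat * 2^k := by
  apply Finset.sum_congr rfl
  intro k hk
  rw [Finset.mem_Ico] at hk
  rw [h k (by omega) (by omega)]

lemma bval_split (a : ℕ → Bool) {n m : ℕ} (hnm : n ≤ m) :
    bval a m = (∑ k ∈ Finset.range n, (a k).toNat * 2^k) + (a n).toNat * 2^n
      + ∑ k ∈ Finset.Ico (n+1) (m+1), (a k).toNat * 2^k := by
  unfold bval
  rw [Finset.range_eq_Ico, ← Finset.sum_Ico_consecutive _ (by omega : 0 ≤ n+1) (by omega : n+1 ≤ m+1)]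
  congr 1
  rw [Finset.range_eq_Ico]
  exact Finset.sum_Ico_succ_top (by omega : 0 ≤ n) (fun k => (a k).toNat * 2^k)

lemma bval_oSucc {a : ℕ → Bool} (hF : ∃ k, a k = false) {m : ℕ}
    (hm : Nat.find hF ≤ m) :
    bval (oSucc a hF) m = bval a m + 1 := by
  set n := Nat.find hF with hn
  have hsa := bval_split a hm
  have hss := bval_split (oSucc a hF) hm
  have h1 : ∀ k ∈ Finset.range n, (a k).toNat * 2^k = 2^k := by
    intro k hk
    rw [Finset.mem_range] at hk
    have := Nat.find_min hF hk
    simp only [Bool.not_eq_false] at this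
    simp [this]
  have h2 : ∀ k ∈ Finset.range n, ((oSucc a hF) k).toNat * 2^k = 0 := by
    intro k hk
    rw [Finset.mem_range] at hk
    simp [oSucc, ← hn, hk]
  rw [Finset.sum_congr rfl h1, pow_sum] at hsa
  rw [Finset.sum_congr rfl h2, Finset.sum_const_zero] at hss
  have h3 : (a n).toNat = 0 := by rw [hn]; simp [Nat.find_spec hF]
  have h4 : ((oSucc a hF) n).toNat = 1 := by simp [oSucc, ← hn]
  have h5 := bval_tail_eq hm (fun k hk _ => oSucc_agree hF k hk)
  have hp : 0 < 2^n := Nat.pow_pos (by norm_num)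
  rw [h3] at hsa; rw [h4] at hss
  omega

lemma find_le_of_bval_lt {a : ℕ → Bool} (hF : ∃ k, a k = false) {m : ℕ}
    (h : bval a m < 2^(m+1) - 1) : Nat.find hF ≤ m := by
  by_contra hc
  push_neg at hc
  have hall : ∀ k, k ≤ m → a k = true := by
    intro k hk
    have := Nat.find_min hF (by omega : k < Nat.find hF)
    simpa using this
  have : bval a m = 2^(m+1) - 1 := by
    unfold bval
    rw [← pow_sum (m+1)]
    apply Finset.sum_congr rfl
    intro k hk
    rw [Finset.mem_range] at hk
    simp [hall k (by omega)]
  omega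

lemma bval_lt_of_bit {a b : ℕ → Bool} {m : ℕ} (ha : a m = false) (hb : b m = true) :
    bval a m < bval b m := by
  have hsa := bval_split a (le_refl m)
  have hsb := bval_split b (le_refl m)
  simp only [Finset.Ico_self, Finset.sum_empty] at hsa hsb
  have hla : ∑ k ∈ Finset.range m, (a k).toNat * 2^k < 2^m := by
    calc ∑ k ∈ Finset.range m, (a k).toNat * 2^k
        ≤ ∑ k ∈ Finset.range m, 2^k := by
          apply Finset.sum_le_sum; intro k _; cases h : a k <;> simp [h]
      _ = 2^m - 1 := pow_sum m
      _ < 2^m := by have : 0 < 2^m := Nat.pow_pos (by norm_num); omega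
  simp [ha] at hsa
  simp [hb] at hsb
  omega

def R (a b : ℕ → Bool) : Prop := ∃ m, (∀ k, k > m → a k = b k) ∧ a m = false ∧ b m = true

lemma R_trans {a b c : ℕ → Bool} (h1 : R a b) (h2 : R b c) : R a c := by
  obtain ⟨m1, hag1, ha1, hb1⟩ := h1
  obtain ⟨m2, hag2, hb2, hc2⟩ := h2
  rcases lt_trichotomy m1 m2 with h | h | h
  · exact ⟨m2, fun k hk => (hag1 k (by omega)).trans (hag2 k hk),
      (hag1 m2 (by omega)).trans hb2, hc2⟩
  · subst h; rw [hb1] at hb2; exact absurd hb2 (by simp)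
  · exact ⟨m1, fun k hk => (hag1 k hk).trans (hag2 k (by omega)),
      ha1, by rw [← hag2 m1 (by omega)]; exact hb1⟩
lemma R_one (a : OS) : R a.1 (E a).1 := by
  refine ⟨Nat.find (hasFalse a.2), fun k hk => (oSucc_agree _ k hk).symm,
    Nat.find_spec (hasFalse a.2), ?_⟩
  show oSucc a.1 (hasFalse a.2) _ = true
  simp [oSucc]

lemma R_pow (z : ℕ) (a : OS) : R a.1 ((E^(z+1)) a).1 := by
  induction z with
  | zero => simpa using R_one a
  | succ z ih =>
    have hstep : R ((E^(z+1)) a).1 ((E^(z+2)) a).1 := by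
      have h : (E^(z+2)) a = E ((E^(z+1)) a) := by
        rw [pow_succ', Equiv.Perm.mul_apply]
      rw [h]
      exact R_one _
    exact R_trans ih hstep

lemma reach : ∀ z : ℕ, ∀ (a b : OS) (m : ℕ), (∀ k, k > m → a.1 k = b.1 k) →
    bval a.1 m + z = bval b.1 m → (E^z) a = b := by
  intro z
  induction z with
  | zero =>
    intro a b m hag hval
    simp only [pow_zero, Equiv.Perm.one_apply]
    apply Subtype.ext
    funext k
    rcases le_or_gt k m with hk | hk
    · exact bval_inj m a.1 b.1 (by omega) k hk
    · exact hag k hk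
  | succ z ih =>
    intro a b m hag hval
    have hb := bval_lt b.1 m
    have hlt : bval a.1 m < 2^(m+1) - 1 := by omega
    have hfind : Nat.find (hasFalse a.2) ≤ m := find_le_of_bval_lt _ hlt
    have hEa : bval (E a).1 m = bval a.1 m + 1 := bval_oSucc _ hfind
    have hEag : ∀ k, k > m → (E a).1 k = b.1 k := by
      intro k hk
      exact (oSucc_agree (hasFalse a.2) k (by omega)).trans (hag k hk)
    have : (E^(z+1)) a = (E^z) (E a) := by
      rw [pow_succ, Equiv.Perm.mul_apply]
    rw [this]
    exact ih (E a) b m hEag (by omega)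


/-- There is a `ℤ`-action (the odometer, adding `1` with carry) on the set
of non-eventually-constant binary sequences such that `a <* b` iff
`b = z·a` for some integer `z > 0`. -/
theorem odometer_action_induces_ltStar :
    ∃ T : ℤ → {a : ℕ → Bool // NotEvConst a} → {a : ℕ → Bool // NotEvConst a},
      (∀ a, T 0 a = a) ∧
      (∀ z w a, T (z + w) a = T z (T w a)) ∧
      (∀ a, ∃ n, a.1 n = false ∧ (∀ k, k < n → a.1 k = true) ∧
        (T 1 a).1 = fun k => if k < n then false else
          if k = n then true else a.1 k) ∧
      (∀ a b : {a : ℕ → Bool // NotEvConst a},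
        ltStar a.1 b.1 ↔ ∃ z : ℤ, 0 < z ∧ b = T z a) := by
  refine ⟨fun z a => (E^z) a, fun a => by show (E^(0:ℤ)) a = a; simp,
    fun z w a => by
      show (E^(z+w)) a = (E^z) ((E^w) a)
      rw [zpow_add, Equiv.Perm.mul_apply], ?_, ?_⟩
  · intro a
    refine ⟨Nat.find (hasFalse a.2), Nat.find_spec (hasFalse a.2), ?_, ?_⟩
    · intro k hk
      have := Nat.find_min (hasFalse a.2) hk
      simpa using this
    · show ((E^(1:ℤ)) a).1 = _
      rw [zpow_one]
      rfl
  · intro a b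
    constructor
    · rintro ⟨hle, hne⟩
      rcases hle with hle | ⟨m, hm⟩
      · rcases hle with heq | ⟨m, hag, hlt⟩
        · exact absurd heq hne
        · have hbits : a.1 m = false ∧ b.1 m = true := by
            rcases Bool.lt_iff.mp hlt with h; exact ⟨h.1, h.2⟩
          have hv : bval a.1 m < bval b.1 m := bval_lt_of_bit hbits.1 hbits.2
          set z : ℕ := bval b.1 m - bval a.1 m with hz
          refine ⟨(z : ℤ), by omega, ?_⟩
          have : (E^z) a = b := reach z a b m hag (by omega)
          show b = (E^((z:ℕ):ℤ)) a
          rw [zpow_natCast, this]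
      · exact absurd ⟨m, fun k hk => (hm k hk).1⟩ a.2.2
    · rintro ⟨z, hz, rfl⟩
      obtain ⟨t, ht⟩ : ∃ t : ℕ, z.toNat = t + 1 := ⟨z.toNat - 1, by omega⟩
      have hzz : (E^z) a = (E^(t+1)) a := by
        rw [show z = ((t+1 : ℕ) : ℤ) by omega, zpow_natCast]
      obtain ⟨m, hag, ha, hb⟩ := R_pow t a
      show ltStar a.1 ((E^z) a).1
      rw [hzz]
      constructor
      · left; right
        exact ⟨m, fun k hk => hag k hk, by rw [ha, hb]; exact Bool.false_lt_true⟩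
      · intro h
        rw [h] at ha
        rw [ha] at hb
        simp at hb
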